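/- Let u_1 = 8/3 − (2/3)·∛19 (≈ 0.887732). For u ∈ [0, u_1) define a_1(u), a_3(u) = (2+u)/56 ∓ (√2/112)·√(u(6−u)(16−u)/(5−u)) (minus sign for a_1) and a_2(u), a_4(u) = (12−u)/56 ∓ (1/(56√2))·√((6+u)(4−u)(10−u)/(5−u)) (minus sign for a_2). Then for every u ∈ [0, u_1): all four values a_1(u), a_2(u), a_3(u), a_4(u) are positive; they satisfy 2(a_1+a_2+a_3+a_4) = 1, 3(a_1a_2+a_2a_3+a_3a_4+a_4a_1) + 4(a_1a_3+a_2a_4) = 1/4, and 4(a_1a_2a_3+a_2a_3a_4+a_3a_4a_1+a_4a_1a_2) = 9/686 (so that A_4C_4 has the eigenvalues 9/14, 2/7, 1/14, 0, i.e. the 1:2:3 frequency resonance). Moreover a_1(u) → 0 as u → u_1 from the left. -/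

import Mathlib

/-! The four values come in pairs `a₁, a₃ = s ∓ d` and `a₂, a₄ = t ∓ e`, so every coefficient of
the characteristic polynomial of `A₄C₄` is a polynomial in the pair sums `a₁ + a₃`, `a₂ + a₄`
(linear in `u`) and the pair products `a₁a₃`, `a₂a₄`, in which the square roots disappear. This
gives rational functions of `u` that collapse to the required constants. Positivity reduces to
that of the products: `a₂a₄ > 0` on `[0, 4]`, while `a₁a₃` is a positive multiple of
`-(3u³ - 24u² + 64u - 40) = -(3(u - 8/3)³ + 152/9)`, whose unique real root is `u₁`. So `a₁ > 0`
for `u < u₁`, and `a₁(u₁) = 0` gives the limit by continuity. -/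

open Matrix Polynomial

/-- The periodic chain matrix `C_n`: `2` on the diagonal, `-1` at positions
`(i, i+1)` and `(i, i-1)` with indices modulo `n`, and `0` elsewhere. -/
def pchain (n : ℕ) [NeZero n] : Matrix (Fin n) (Fin n) ℝ :=
  Matrix.of fun i j => if i = j then 2 else if j = i + 1 ∨ i = j + 1 then -1 else 0

/-- `u₁ = 8/3 − (2/3)·∛19`. -/
noncomputable def u1 : ℝ := 8 / 3 - (2 / 3) * (19 : ℝ) ^ ((1 : ℝ) / 3)

noncomputable def a1 (u : ℝ) : ℝ :=
  (2 + u) / 56 - (Real.sqrt 2 / 112) * Real.sqrt (u * (6 - u) * (16 - u) / (5 - u))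

noncomputable def a3 (u : ℝ) : ℝ :=
  (2 + u) / 56 + (Real.sqrt 2 / 112) * Real.sqrt (u * (6 - u) * (16 - u) / (5 - u))

noncomputable def a2 (u : ℝ) : ℝ :=
  (12 - u) / 56 - (1 / (56 * Real.sqrt 2)) * Real.sqrt ((6 + u) * (4 - u) * (10 - u) / (5 - u))

noncomputable def a4 (u : ℝ) : ℝ :=
  (12 - u) / 56 + (1 / (56 * Real.sqrt 2)) * Real.sqrt ((6 + u) * (4 - u) * (10 - u) / (5 - u))

theorem charpoly_diagonal_mul_pchain_four (b₁ b₂ b₃ b₄ : ℝ) :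
    (Matrix.diagonal ![b₁, b₂, b₃, b₄] * pchain 4).charpoly =
      X ^ 4 - C (2 * (b₁ + b₂ + b₃ + b₄)) * X ^ 3
        + C (3 * (b₁ * b₂ + b₂ * b₃ + b₃ * b₄ + b₄ * b₁) + 4 * (b₁ * b₃ + b₂ * b₄)) * X ^ 2
        - C (4 * (b₁ * b₂ * b₃ + b₂ * b₃ * b₄ + b₃ * b₄ * b₁ + b₄ * b₁ * b₂)) * X := by
  have hM : Matrix.diagonal ![b₁, b₂, b₃, b₄] * pchain 4 =
      !![2 * b₁, -b₁, 0, -b₁; -b₂, 2 * b₂, -b₂, 0; 0, -b₃, 2 * b₃, -b₃; -b₄, 0, -b₄, 2 * b₄] := by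
    ext i j
    fin_cases i <;> fin_cases j <;> simp [pchain, Matrix.mul_apply, Fin.sum_univ_four, mul_comm]
  rw [hM, Matrix.charpoly]
  apply Polynomial.funext
  intro x
  simp [charmatrix_apply, Matrix.det_succ_row_zero, Fin.sum_univ_succ, Fin.succAbove,
    Matrix.diagonal_apply]
  ring

theorem X_mul_resonance_factors :
    (X * (X - C (9 / 14)) * (X - C (2 / 7)) * (X - C (1 / 14)) : ℝ[X]) =
      X ^ 4 - C 1 * X ^ 3 + C (1 / 4) * X ^ 2 - C (9 / 686) * X := by
  apply Polynomial.funext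
  intro x
  simp only [one_div, eval_mul, eval_X, eval_sub, eval_C, map_one, one_mul, eval_add, eval_pow]
  ring

theorem rpow_one_div_three_pow_three {x : ℝ} (hx : 0 ≤ x) : (x ^ ((1 : ℝ) / 3)) ^ 3 = x := by
  rw [one_div]
  exact_mod_cast Real.rpow_inv_natCast_pow hx three_ne_zero

theorem u1_mem_Ioo : u1 ∈ Set.Ioo 0 (8 / 3) := by
  have hc : (0 : ℝ) < 19 ^ ((1 : ℝ) / 3) := by positivity
  have hc3 := rpow_one_div_three_pow_three (x := 19) (by norm_num)
  constructor <;> unfold u1 <;> nlinarith [sq_nonneg ((19 : ℝ) ^ ((1 : ℝ) / 3) - 4)]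

theorem cubic_eq_shifted (u : ℝ) :
    3 * u ^ 3 - 24 * u ^ 2 + 64 * u - 40 = 3 * (u - 8 / 3) ^ 3 + 152 / 9 := by ring

theorem cubic_u1_eq_zero : 3 * u1 ^ 3 - 24 * u1 ^ 2 + 64 * u1 - 40 = 0 := by
  rw [cubic_eq_shifted, u1]
  linear_combination (-8 / 9 : ℝ) * rpow_one_div_three_pow_three (x := 19) (by norm_num)

theorem cubic_neg_of_lt_u1 {u : ℝ} (hu : u < u1) : 3 * u ^ 3 - 24 * u ^ 2 + 64 * u - 40 < 0 := by
  have h := Odd.strictMono_pow (R := ℝ) (n := 3) (by decide) (sub_lt_sub_right hu (8 / 3))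
  have h1 := cubic_u1_eq_zero
  rw [cubic_eq_shifted] at h1 ⊢
  linarith

theorem a1_add_a3 (u : ℝ) : a1 u + a3 u = (2 + u) / 28 := by
  unfold a1 a3; ring

theorem a2_add_a4 (u : ℝ) : a2 u + a4 u = (12 - u) / 28 := by
  unfold a2 a4; ring

theorem a1_mul_a3 {u : ℝ} (h0 : 0 ≤ u) (h5 : u < 5) :
    a1 u * a3 u = -(3 * u ^ 3 - 24 * u ^ 2 + 64 * u - 40) / (6272 * (5 - u)) := by
  have hR : 0 ≤ u * (6 - u) * (16 - u) / (5 - u) :=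
    div_nonneg (mul_nonneg (mul_nonneg h0 (by linarith)) (by linarith)) (by linarith)
  have h5ne : 5 - u ≠ 0 := by linarith
  unfold a1 a3
  rw [mul_comm, ← sq_sub_sq]
  simp only [mul_pow, div_pow, Real.sq_sqrt zero_le_two, Real.sq_sqrt hR]
  field_simp
  ring

theorem a2_mul_a4 {u : ℝ} (h6 : -6 ≤ u) (h4 : u ≤ 4) :
    a2 u * a4 u = (1200 - 484 * u + 66 * u ^ 2 - 3 * u ^ 3) / (6272 * (5 - u)) := by
  have hR : 0 ≤ (6 + u) * (4 - u) * (10 - u) / (5 - u) :=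
    div_nonneg (mul_nonneg (mul_nonneg (by linarith) (by linarith)) (by linarith)) (by linarith)
  have h5ne : 5 - u ≠ 0 := by linarith
  unfold a2 a4
  rw [mul_comm, ← sq_sub_sq]
  simp only [mul_pow, div_pow, Real.sq_sqrt zero_le_two, Real.sq_sqrt hR]
  field_simp
  ring

theorem a3_pos {u : ℝ} (h : -2 < u) : 0 < a3 u :=
  add_pos_of_pos_of_nonneg (by linarith) (by positivity)

theorem a4_pos {u : ℝ} (h : u < 12) : 0 < a4 u :=
  add_pos_of_pos_of_nonneg (by linarith) (by positivity)

theorem a1_pos {u : ℝ} (h0 : 0 ≤ u) (hu : u < u1) : 0 < a1 u := by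
  have hu1 := u1_mem_Ioo.2
  have h13 : 0 < a1 u * a3 u := by
    rw [a1_mul_a3 h0 (by linarith)]
    exact div_pos (neg_pos.2 (cubic_neg_of_lt_u1 hu)) (by linarith)
  exact pos_of_mul_pos_left h13 (a3_pos (by linarith)).le

theorem a2_pos {u : ℝ} (h0 : 0 ≤ u) (h4 : u ≤ 4) : 0 < a2 u := by
  have h24 : 0 < a2 u * a4 u := by
    rw [a2_mul_a4 (by linarith) h4]
    exact div_pos (by nlinarith) (by linarith)
  exact pos_of_mul_pos_left h24 (a4_pos (by linarith)).le

theorem two_mul_a_sum (u : ℝ) : 2 * (a1 u + a2 u + a3 u + a4 u) = 1 := by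
  linear_combination 2 * a1_add_a3 u + 2 * a2_add_a4 u

theorem a_quadratic_form {u : ℝ} (h0 : 0 ≤ u) (h4 : u ≤ 4) :
    3 * (a1 u * a2 u + a2 u * a3 u + a3 u * a4 u + a4 u * a1 u)
      + 4 * (a1 u * a3 u + a2 u * a4 u) = 1 / 4 := by
  have h5 : 5 - u ≠ 0 := by linarith
  calc _ = 3 * ((a1 u + a3 u) * (a2 u + a4 u)) + 4 * (a1 u * a3 u + a2 u * a4 u) := by ring
    _ = 1 / 4 := by
      rw [a1_add_a3, a2_add_a4, a1_mul_a3 h0 (by linarith), a2_mul_a4 (by linarith) h4]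
      field_simp
      ring

theorem a_cubic_form {u : ℝ} (h0 : 0 ≤ u) (h4 : u ≤ 4) :
    4 * (a1 u * a2 u * a3 u + a2 u * a3 u * a4 u + a3 u * a4 u * a1 u + a4 u * a1 u * a2 u)
      = 9 / 686 := by
  have h5 : 5 - u ≠ 0 := by linarith
  calc _ = 4 * (a1 u * a3 u * (a2 u + a4 u) + a2 u * a4 u * (a1 u + a3 u)) := by ring
    _ = 9 / 686 := by
      rw [a1_add_a3, a2_add_a4, a1_mul_a3 h0 (by linarith), a2_mul_a4 (by linarith) h4]
      field_simp
      ring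

theorem a1_u1 : a1 u1 = 0 := by
  have hu1 := u1_mem_Ioo
  have h13 : a1 u1 * a3 u1 = 0 := by
    rw [a1_mul_a3 hu1.1.le (by linarith [hu1.2]), cubic_u1_eq_zero, neg_zero, zero_div]
  exact (mul_eq_zero.1 h13).resolve_right (a3_pos (by linarith [hu1.1])).ne'

theorem continuousAt_a1 {u : ℝ} (h : u ≠ 5) : ContinuousAt a1 u := by
  have h5 : 5 - u ≠ 0 := sub_ne_zero.2 h.symm
  unfold a1
  fun_prop (disch := exact h5)

theorem stmt12 :
    (∀ u ∈ Set.Ico (0 : ℝ) u1,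
      (0 < a1 u ∧ 0 < a2 u ∧ 0 < a3 u ∧ 0 < a4 u) ∧
      2 * (a1 u + a2 u + a3 u + a4 u) = 1 ∧
      3 * (a1 u * a2 u + a2 u * a3 u + a3 u * a4 u + a4 u * a1 u)
        + 4 * (a1 u * a3 u + a2 u * a4 u) = 1 / 4 ∧
      4 * (a1 u * a2 u * a3 u + a2 u * a3 u * a4 u + a3 u * a4 u * a1 u
        + a4 u * a1 u * a2 u) = 9 / 686 ∧
      (Matrix.diagonal ![a1 u, a2 u, a3 u, a4 u] * pchain 4).charpoly =
        X * (X - C (9 / 14)) * (X - C (2 / 7)) * (X - C (1 / 14))) ∧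
    Filter.Tendsto a1 (nhdsWithin u1 (Set.Iio u1)) (nhds 0) := by
  have hu1 := u1_mem_Ioo
  refine ⟨fun u ⟨h0, hu⟩ => ?_, ?_⟩
  · have h4 : u ≤ 4 := by linarith [hu1.2]
    have h1 := two_mul_a_sum u
    have h2 := a_quadratic_form h0 h4
    have h3 := a_cubic_form h0 h4
    refine ⟨⟨a1_pos h0 hu, a2_pos h0 h4, a3_pos (by linarith), a4_pos (by linarith)⟩,
      h1, h2, h3, ?_⟩
    rw [charpoly_diagonal_mul_pchain_four, h1, h2, h3, X_mul_resonance_factors]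
  · rw [← a1_u1]
    exact (continuousAt_a1 (by linarith [hu1.2])).continuousWithinAt
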